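/- Let P and Q be q-exact cone decompositions of graded K-subspaces T and T' of graded free modules over S = K[x_1,...,x_n] (with the same q). If T and T' have the same Hilbert polynomial, then P and Q have the same Macaulay constants b_1,...,b_{n+1}. -/

import Mathlib

open MvPolynomial

noncomputable section

variable (K : Type*) [Field K]

/-- The free module `F = S e₁ ⊕ ⋯ ⊕ S eₘ` over `S = K[x₁,…,xₙ]`, realized as `Fin m → S`. -/
abbrev FreeMod (n m : ℕ) := Fin m → MvPolynomial (Fin n) K

/-- The monomial `x^d · e_j` of the free module. -/
def mval {n m : ℕ} (p : Fin m × (Fin n →₀ ℕ)) : FreeMod K n m :=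
  Pi.single p.1 (monomial p.2 (1 : K))

/-- Degree of the monomial `x^d e_j` relative to basis degrees `e`. -/
def mdeg {n m : ℕ} (e : Fin m → ℕ) (p : Fin m × (Fin n →₀ ℕ)) : ℕ :=
  (p.2.sum fun _ k => k) + e p.1

/-- The degree-`z` homogeneous component of the graded free module (as a `K`-subspace). -/
def degComp (n m : ℕ) (e : Fin m → ℕ) (z : ℕ) : Submodule K (FreeMod K n m) :=
  Submodule.span K { f | ∃ p : Fin m × (Fin n →₀ ℕ), mdeg e p = z ∧ f = mval K p }

/-- The cone `h·K[u]`: the `K`-span of the products of `h` with monomials in the variables `u`. -/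
def cone {n m : ℕ} (h : FreeMod K n m) (u : Set (Fin n)) : Submodule K (FreeMod K n m) :=
  Submodule.span K
    { f | ∃ d : Fin n →₀ ℕ, ↑d.support ⊆ u ∧ f = (monomial d (1 : K)) • h }

/-- Data of a cone: a pivot, a set of variables, and the degree of the pivot. -/
abbrev ConeData (K : Type*) [Field K] (n m : ℕ) :=
  (FreeMod K n m) × Finset (Fin n) × ℕ

/-- `P` is a cone decomposition of the `K`-subspace `T ⊆ F`: pivots are nonzero homogeneous
of the recorded degree, and `T` is the internal direct sum of the cones of `P`. -/
def IsConeDecomp {n m : ℕ} (e : Fin m → ℕ) (P : Finset (ConeData K n m))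
    (T : Submodule K (FreeMod K n m)) : Prop :=
  (∀ c ∈ P, c.1 ≠ 0 ∧ c.1 ∈ degComp K n m e c.2.2) ∧
  iSupIndep (fun c : P => cone K c.1.1 ↑c.1.2.1) ∧
  (⨆ c : P, cone K c.1.1 ↑c.1.2.1) = T

/-- `P` is `q`-standard. -/
def IsStandard {n m : ℕ} (q : ℕ) (P : Finset (ConeData K n m)) : Prop :=
  (∀ c ∈ P, 0 < c.2.1.card → q ≤ c.2.2) ∧
  (∀ c ∈ P, 0 < c.2.1.card → ∀ d, q ≤ d → d ≤ c.2.2 →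
    ∃ c' ∈ P, c'.2.2 = d ∧ c.2.1.card ≤ c'.2.1.card)

/-- `P` is `q`-exact: `q`-standard and the positive-dimensional cones have distinct degrees. -/
def IsExact {n m : ℕ} (q : ℕ) (P : Finset (ConeData K n m)) : Prop :=
  IsStandard K q P ∧
  ∀ c ∈ P, ∀ c' ∈ P, 0 < c.2.1.card → 0 < c'.2.1.card → c ≠ c' → c.2.2 ≠ c'.2.2

/-- The Macaulay constants `b k = max({q} ∪ {1 + deg C : C ∈ P, dim C ≥ k})`. -/
def macaulay {n m : ℕ} (q : ℕ) (P : Finset (ConeData K n m)) (k : ℕ) : ℕ :=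
  max q ((P.filter fun c => k ≤ c.2.1.card).sup fun c => c.2.2 + 1)

/-- The Hilbert function of a graded `K`-subspace `T ⊆ F`. -/
def hilb {n m : ℕ} (e : Fin m → ℕ) (T : Submodule K (FreeMod K n m)) (z : ℕ) : ℕ :=
  Module.finrank K ↥(T ⊓ degComp K n m e z)

/-- The set of monomials (with their positions) appearing in `f ∈ F`. -/
def suppM {n m : ℕ} (f : FreeMod K n m) : Finset (Fin m × (Fin n →₀ ℕ)) :=
  Finset.univ.biUnion fun j => (f j).support.image fun d => (j, d)

/-- `p` is the leading monomial of `f` with respect to the monomial order `mo`. -/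
def IsLM {n m : ℕ} (mo : LinearOrder (Fin m × (Fin n →₀ ℕ))) (f : FreeMod K n m)
    (p : Fin m × (Fin n →₀ ℕ)) : Prop :=
  p ∈ suppM K f ∧ ∀ p' ∈ suppM K f, mo.le p' p

/-- The initial module of `M` w.r.t. the monomial order `mo`. -/
def initMod {n m : ℕ} (mo : LinearOrder (Fin m × (Fin n →₀ ℕ)))
    (M : Submodule (MvPolynomial (Fin n) K) (FreeMod K n m)) :
    Submodule (MvPolynomial (Fin n) K) (FreeMod K n m) :=
  Submodule.span _ { f | ∃ g ∈ M, ∃ p, IsLM K mo g p ∧ f = mval K p }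

/-- `G` is a Gröbner basis of `M` w.r.t. `mo`. -/
def IsGB {n m : ℕ} (mo : LinearOrder (Fin m × (Fin n →₀ ℕ)))
    (G : Set (FreeMod K n m))
    (M : Submodule (MvPolynomial (Fin n) K) (FreeMod K n m)) : Prop :=
  G ⊆ M ∧
  Submodule.span (MvPolynomial (Fin n) K)
      { f | ∃ g ∈ G, ∃ p, IsLM K mo g p ∧ f = mval K p } = initMod K mo M

/-- `mo` is a monomial order: compatible with multiplication and monomials of `S` are ≻ 1. -/
def IsMonomialOrder {n m : ℕ} (mo : LinearOrder (Fin m × (Fin n →₀ ℕ))) : Prop :=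
  (∀ a b : Fin m × (Fin n →₀ ℕ), ∀ γ : Fin n →₀ ℕ,
      mo.lt a b → mo.lt (a.1, a.2 + γ) (b.1, b.2 + γ)) ∧
  (∀ (j : Fin m) (α γ : Fin n →₀ ℕ), γ ≠ 0 → mo.lt (j, α) (j, α + γ))

/-- `G` is the reduced Gröbner basis of `M` w.r.t. `mo`. -/
def IsReducedGB {n m : ℕ} (mo : LinearOrder (Fin m × (Fin n →₀ ℕ)))
    (G : Set (FreeMod K n m))
    (M : Submodule (MvPolynomial (Fin n) K) (FreeMod K n m)) : Prop :=
  IsGB K mo G M ∧ (0 : FreeMod K n m) ∉ G ∧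
  (∀ g ∈ G, ∀ p, IsLM K mo g p → (g p.1).coeff p.2 = 1) ∧
  (∀ g ∈ G, ∀ g' ∈ G, g ≠ g' → ∀ q ∈ suppM K g, ∀ p, IsLM K mo g' p →
    ¬ (p.1 = q.1 ∧ p.2 ≤ q.2))

/-- The zeroth Fitting ideal of `F/M`: the ideal of `m × m` minors of a presentation matrix,
equivalently generated by determinants of matrices whose columns lie in `M`. -/
def fitt0 {n m : ℕ} (M : Submodule (MvPolynomial (Fin n) K) (FreeMod K n m)) :
    Ideal (MvPolynomial (Fin n) K) :=
  Ideal.span { p | ∃ A : Matrix (Fin m) (Fin m) (MvPolynomial (Fin n) K),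
    (∀ i, (fun j => A j i) ∈ M) ∧ p = A.det }

end

/-!
Past all cone degrees, the degree-`z` piece of a cone `h·K[u]` with `deg h = d` has a basis of
monomial multiples of `h`, hence dimension `multichoose |u| (z - d)`; since every cone is stable
under the projection onto degree `z`, the direct sum gives
`HF_T(z) = ∑_C multichoose (dim C) (z - deg C)`. Splitting
`multichoose r (s + 1) = ∑_{k < r} multichoose (k + 1) s` and using exactness (the degrees of the
cones of dimension `≥ k` are exactly `q, …, b_k - 1`) turns this into
`∑_k ∑_{q ≤ d < b_{k+1}} multichoose (k + 1) (z - d - 1)`. This expression determines the `b_k`: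
its first difference in `z` is the same expression for the shifted sequence `b_{k+1}`, and once
`b_2, b_3, …` are known, its value gives `b_1 - q`.
-/

open Finset Module Filter

theorem Nat.multichoose_succ_eq_sum_range (r s : ℕ) :
    Nat.multichoose r (s + 1) = ∑ k ∈ range r, Nat.multichoose (k + 1) s := by
  induction r with
  | zero => simp [Nat.multichoose_zero_succ]
  | succ r ih => rw [Nat.multichoose_succ_succ, ih, sum_range_succ]

/-- The Hilbert function, past all cone degrees, of a `q`-exact decomposition whose Macaulay
constants are `b 1, …, b N`. -/
noncomputable def macaulayHilbFun (q : ℕ) (b : ℕ → ℕ) (N z : ℕ) : ℕ :=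
  ∑ k ∈ range N, ∑ d ∈ Ico q (b (k + 1)), Nat.multichoose (k + 1) (z - (d + 1))

theorem macaulayHilbFun_succ (q : ℕ) (b : ℕ → ℕ) (N z : ℕ) (hz : ∀ k < N + 1, b (k + 1) ≤ z) :
    macaulayHilbFun q b (N + 1) (z + 1) =
      macaulayHilbFun q b (N + 1) z + macaulayHilbFun q (fun k => b (k + 1)) N (z + 1) := by
  have hterm : ∀ k < N + 1, ∀ d ∈ Ico q (b (k + 1)),
      Nat.multichoose (k + 1) (z + 1 - (d + 1)) =
        Nat.multichoose (k + 1) (z - (d + 1)) + Nat.multichoose k (z - d) := by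
    intro k hk d hd
    have hdz : d < z := (mem_Ico.1 hd).2.trans_le (hz k hk)
    rw [show z + 1 - (d + 1) = z - (d + 1) + 1 by omega, Nat.multichoose_succ_succ,
      show z - (d + 1) + 1 = z - d by omega, add_comm]
  have hlow : ∀ d ∈ Ico q (b 1), Nat.multichoose 0 (z - d) = 0 := by
    intro d hd
    have hdz : d < z := (mem_Ico.1 hd).2.trans_le (hz 0 (Nat.succ_pos N))
    rw [show z - d = z - d - 1 + 1 by omega, Nat.multichoose_zero_succ]
  unfold macaulayHilbFun
  simp only [sum_congr rfl fun k hk => sum_congr rfl (hterm k (mem_range.1 hk)), sum_add_distrib]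
  rw [sum_range_succ' (fun k => ∑ d ∈ Ico q (b (k + 1)), Nat.multichoose k (z - d)),
    sum_eq_zero hlow, add_zero]
  congr 2 with k
  exact sum_congr rfl fun d _ => by rw [show z + 1 - (d + 1) = z - d by omega]

theorem eq_of_macaulayHilbFun_eventuallyEq {q : ℕ} {N : ℕ} {b b' : ℕ → ℕ}
    (hb : ∀ k, q ≤ b k) (hb' : ∀ k, q ≤ b' k)
    (h : ∀ᶠ z in atTop, macaulayHilbFun q b N z = macaulayHilbFun q b' N z) :
    ∀ k, 1 ≤ k → k ≤ N → b k = b' k := by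
  induction N generalizing b b' with
  | zero => intro k hk1 hk2; omega
  | succ N ih =>
    have hbig : ∀ᶠ z in atTop, ∀ k ∈ range (N + 1), b (k + 1) ≤ z ∧ b' (k + 1) ≤ z :=
      (eventually_all_finset _).2 fun k _ =>
        (eventually_ge_atTop (b (k + 1))).and (eventually_ge_atTop (b' (k + 1)))
    have htail : ∀ k, 1 ≤ k → k ≤ N → b (k + 1) = b' (k + 1) := by
      refine ih (fun k => hb (k + 1)) (fun k => hb' (k + 1)) ?_
      obtain ⟨M, hM⟩ := eventually_atTop.1 (h.and hbig)
      refine eventually_atTop.2 ⟨M + 1, fun z hz => ?_⟩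
      obtain ⟨z, rfl⟩ : ∃ y, z = y + 1 := ⟨z - 1, by omega⟩
      obtain ⟨h₀, hb₀⟩ := hM z (by omega)
      obtain ⟨h₁, -⟩ := hM (z + 1) (by omega)
      rw [macaulayHilbFun_succ q b N z fun k hk => (hb₀ k (mem_range.2 hk)).1,
        macaulayHilbFun_succ q b' N z fun k hk => (hb₀ k (mem_range.2 hk)).2, h₀] at h₁
      omega
    intro k hk1 hk2
    rcases k with _ | _ | k
    · omega
    · obtain ⟨z, hz⟩ := h.exists
      unfold macaulayHilbFun at hz
      rw [sum_range_succ', sum_range_succ'] at hz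
      simp only [Nat.multichoose_one, sum_const, smul_eq_mul, mul_one, Nat.card_Ico,
        zero_add] at hz
      rw [sum_congr rfl fun k hk => by rw [htail (k + 1) (by omega) (by simp at hk; omega)]] at hz
      show b 1 = b' 1
      have := hb 1; have := hb' 1
      omega
    · exact htail (k + 1) (by omega) (by omega)

namespace Submodule

variable {R M ι : Type*} [Semiring R] [AddCommMonoid M] [Module R M]
  {π : M →ₗ[R] M} {D : Submodule R M}

theorem inf_le_map_of_eqOn (hπ : Set.EqOn π id D) (W : Submodule R M) : W ⊓ D ≤ W.map π :=
  fun x ⟨hxW, hxD⟩ => (show π x = x from hπ hxD) ▸ mem_map_of_mem hxW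

theorem iSup_inf_eq_of_map_le (hπ : Set.EqOn π id D) {W : ι → Submodule R M}
    (hW : ∀ i, (W i).map π ≤ W i ⊓ D) : (⨆ i, W i) ⊓ D = ⨆ i, W i ⊓ D := by
  refine le_antisymm ?_ (iSup_le fun i => inf_le_inf_right D (le_iSup W i))
  calc (⨆ i, W i) ⊓ D ≤ (⨆ i, W i).map π := inf_le_map_of_eqOn hπ _
    _ = ⨆ i, (W i).map π := map_iSup π W
    _ ≤ ⨆ i, W i ⊓ D := iSup_mono hW

theorem finrank_iSup_eq_sum {K V : Type*} [DivisionRing K] [AddCommGroup V] [Module K V]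
    [Fintype ι] {W : ι → Submodule K V} (hW : iSupIndep W) [∀ i, FiniteDimensional K (W i)] :
    finrank K ↥(⨆ i, W i) = ∑ i, finrank K (W i) := by
  classical
  rw [← finrank_directSum, iSup_eq_range_dfinsupp_lsum,
    ← LinearEquiv.finrank_eq (LinearEquiv.ofInjective _ hW.dfinsupp_lsum_injective)]
  rfl

end Submodule

section

variable {K : Type*} [Field K] {n m : ℕ}

theorem Finset.mem_finsuppAntidiag_iff_degree {σ : Type*} [DecidableEq σ] {u : Finset σ} {s : ℕ}
    {γ : σ →₀ ℕ} : γ ∈ u.finsuppAntidiag s ↔ γ.degree = s ∧ γ.support ⊆ u :=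
  mem_finsuppAntidiag'

noncomputable def degProj (e : Fin m → ℕ) (z : ℕ) : FreeMod K n m →ₗ[K] FreeMod K n m :=
  LinearMap.pi fun j =>
    if e j ≤ z then (homogeneousComponent (z - e j)).comp (LinearMap.proj j) else 0

theorem mdeg_eq_degree_add (e : Fin m → ℕ) (p : Fin m × (Fin n →₀ ℕ)) :
    mdeg e p = p.2.degree + e p.1 :=
  rfl

theorem degProj_mval (e : Fin m → ℕ) (z : ℕ) (p : Fin m × (Fin n →₀ ℕ)) :
    degProj e z (mval K p) = if mdeg e p = z then mval K p else 0 := by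
  funext j
  rcases eq_or_ne j p.1 with rfl | hj
  · simp only [degProj, mval, LinearMap.pi_apply, mdeg_eq_degree_add]
    split_ifs <;>
      simp_all [homogeneousComponent_of_mem (isHomogeneous_monomial (1 : K) rfl)] <;> omega
  · simp only [degProj, mval, LinearMap.pi_apply]
    split_ifs <;> simp [Pi.single_eq_of_ne hj]

theorem degProj_eq_self {e : Fin m → ℕ} {z : ℕ} {f : FreeMod K n m}
    (hf : f ∈ degComp K n m e z) : degProj e z f = f :=
  LinearMap.eqOn_span' (g := LinearMap.id) (by rintro _ ⟨p, hp, rfl⟩; simp [degProj_mval, hp]) hf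

theorem degProj_eq_zero {e : Fin m → ℕ} {w z : ℕ} (hwz : w ≠ z) {f : FreeMod K n m}
    (hf : f ∈ degComp K n m e w) : degProj e z f = 0 :=
  LinearMap.eqOn_span' (g := 0) (by rintro _ ⟨p, rfl, rfl⟩; simp [degProj_mval, hwz]) hf

theorem monomial_smul_mval (γ : Fin n →₀ ℕ) (p : Fin m × (Fin n →₀ ℕ)) :
    monomial γ (1 : K) • mval K p = mval K (p.1, γ + p.2) := by
  rw [mval, mval, ← Pi.single_smul, smul_eq_mul, monomial_mul, one_mul]

theorem monomial_smul_mem_degComp {e : Fin m → ℕ} {D : ℕ} {h : FreeMod K n m}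
    (hh : h ∈ degComp K n m e D) (γ : Fin n →₀ ℕ) :
    monomial γ (1 : K) • h ∈ degComp K n m e (D + γ.degree) := by
  refine (Submodule.map_span_le (DistribSMul.toLinearMap K _ (monomial γ (1 : K))) _ _).2
    ?_ (Submodule.mem_map_of_mem hh)
  rintro _ ⟨p, rfl, rfl⟩
  refine Submodule.subset_span ⟨(p.1, γ + p.2), ?_, monomial_smul_mval γ p⟩
  simp only [mdeg_eq_degree_add, map_add]
  ring

theorem degProj_monomial_smul {e : Fin m → ℕ} {D : ℕ} {h : FreeMod K n m}
    (hh : h ∈ degComp K n m e D) (γ : Fin n →₀ ℕ) (z : ℕ) :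
    degProj e z (monomial γ (1 : K) • h) =
      if D + γ.degree = z then monomial γ (1 : K) • h else 0 := by
  split_ifs with hz
  · exact degProj_eq_self (hz ▸ monomial_smul_mem_degComp hh γ)
  · exact degProj_eq_zero hz (monomial_smul_mem_degComp hh γ)

theorem map_degProj_cone_le {e : Fin m → ℕ} {D : ℕ} {h : FreeMod K n m}
    (hh : h ∈ degComp K n m e D) (u : Finset (Fin n)) (z : ℕ) :
    (cone K h u).map (degProj e z) ≤
      Submodule.span K ((fun γ => monomial γ (1 : K) • h) ''
        (u.finsuppAntidiag (z - D) : Set (Fin n →₀ ℕ))) := by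
  rw [cone, Submodule.map_span, Submodule.span_le]
  rintro _ ⟨_, ⟨γ, hγu, rfl⟩, rfl⟩
  rw [degProj_monomial_smul hh]
  split_ifs with hγ
  · exact Submodule.subset_span
      ⟨γ, mem_finsuppAntidiag_iff_degree.2 ⟨Nat.eq_sub_of_add_eq' hγ, coe_subset.1 hγu⟩, rfl⟩
  · exact zero_mem _

theorem cone_inf_degComp {e : Fin m → ℕ} {D z : ℕ} {h : FreeMod K n m}
    (hh : h ∈ degComp K n m e D) (u : Finset (Fin n)) (hDz : D ≤ z) :
    cone K h u ⊓ degComp K n m e z =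
      Submodule.span K ((fun γ => monomial γ (1 : K) • h) ''
        (u.finsuppAntidiag (z - D) : Set (Fin n →₀ ℕ))) := by
  refine le_antisymm ((Submodule.inf_le_map_of_eqOn (fun _ => degProj_eq_self) _).trans
    (map_degProj_cone_le hh u z)) (Submodule.span_le.2 ?_)
  rintro _ ⟨γ, hγ, rfl⟩
  obtain ⟨hdeg, hγu⟩ := mem_finsuppAntidiag_iff_degree.1 hγ
  refine ⟨Submodule.subset_span ⟨γ, coe_subset.2 hγu, rfl⟩, ?_⟩
  have := monomial_smul_mem_degComp hh γ
  rwa [hdeg, Nat.add_sub_cancel' hDz] at this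

theorem linearIndependent_monomial_smul {h : FreeMod K n m} (hh : h ≠ 0) :
    LinearIndependent K fun γ : Fin n →₀ ℕ => monomial γ (1 : K) • h := by
  have hinj : LinearMap.ker
      ((LinearMap.toSpanSingleton (MvPolynomial (Fin n) K) _ h).restrictScalars K) = ⊥ :=
    LinearMap.ker_eq_bot.2 (smul_left_injective _ hh)
  convert (basisMonomials (Fin n) K).linearIndependent.map' _ hinj using 1 <;> rfl

theorem finrank_cone_inf_degComp {e : Fin m → ℕ} {D z : ℕ} {h : FreeMod K n m} (hh0 : h ≠ 0)
    (hh : h ∈ degComp K n m e D) (u : Finset (Fin n)) (hDz : D ≤ z) :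
    finrank K ↥(cone K h u ⊓ degComp K n m e z) = (#u).multichoose (z - D) := by
  rw [cone_inf_degComp hh u hDz, Set.image_eq_range, finrank_span_eq_card
    (b := fun γ : (u.finsuppAntidiag (z - D) : Set (Fin n →₀ ℕ)) => monomial γ.1 (1 : K) • h)
    ((linearIndependent_monomial_smul hh0).comp _ Subtype.val_injective)]
  simp [card_finsuppAntidiag_nat_eq_multichoose]

theorem finiteDimensional_cone_inf_degComp {e : Fin m → ℕ} {D z : ℕ} {h : FreeMod K n m}
    (hh : h ∈ degComp K n m e D) (u : Finset (Fin n)) (hDz : D ≤ z) :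
    FiniteDimensional K ↥(cone K h u ⊓ degComp K n m e z) := by
  rw [cone_inf_degComp hh u hDz]
  exact FiniteDimensional.span_of_finite K ((finite_toSet _).image _)

theorem hilb_eq_sum_multichoose {e : Fin m → ℕ} {P : Finset (ConeData K n m)}
    {T : Submodule K (FreeMod K n m)} (hdec : IsConeDecomp K e P T) {z : ℕ}
    (hz : ∀ c ∈ P, c.2.2 ≤ z) :
    hilb K e T z = ∑ c ∈ P, (#c.2.1).multichoose (z - c.2.2) := by
  obtain ⟨hpiv, hind, rfl⟩ := hdec
  have hgraded (c : P) : (cone K c.1.1 c.1.2.1).map (degProj e z) ≤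
      cone K c.1.1 c.1.2.1 ⊓ degComp K n m e z :=
    (map_degProj_cone_le (hpiv c c.2).2 _ z).trans
      (cone_inf_degComp (hpiv c c.2).2 _ (hz c c.2)).ge
  have hfin (c : P) := finiteDimensional_cone_inf_degComp (hpiv c c.2).2 c.1.2.1 (hz c c.2)
  rw [hilb, Submodule.iSup_inf_eq_of_map_le (fun _ => degProj_eq_self) hgraded,
    Submodule.finrank_iSup_eq_sum (hind.mono fun c => inf_le_left), ← sum_coe_sort P]
  exact sum_congr rfl fun c _ =>
    finrank_cone_inf_degComp (hpiv c c.2).1 (hpiv c c.2).2 _ (hz c c.2)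

theorem image_deg_filter_eq_Ico {q k : ℕ} {P : Finset (ConeData K n m)} (hP : IsStandard K q P)
    (hk : 0 < k) :
    (P.filter fun c => k ≤ #c.2.1).image (fun c => c.2.2) = Ico q (macaulay K q P k) := by
  ext d
  simp only [mem_image, mem_filter, mem_Ico, macaulay, lt_max_iff]
  constructor
  · rintro ⟨c, ⟨hcP, hck⟩, rfl⟩
    exact ⟨hP.1 c hcP (by omega),
      Or.inr (le_sup (f := fun c => c.2.2 + 1) (mem_filter.2 ⟨hcP, hck⟩))⟩
  · rintro ⟨hqd, hd | hd⟩
    · omega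
    obtain ⟨c, hc, hdc⟩ := (Finset.lt_sup_iff).1 hd
    obtain ⟨hcP, hck⟩ := mem_filter.1 hc
    obtain ⟨c', hc'P, rfl, hcc'⟩ := hP.2 c hcP (by omega) d hqd (by omega)
    exact ⟨c', ⟨hc'P, hck.trans hcc'⟩, rfl⟩

theorem hilb_eq_macaulayHilbFun {q : ℕ} {e : Fin m → ℕ} {P : Finset (ConeData K n m)}
    {T : Submodule K (FreeMod K n m)} (hdec : IsConeDecomp K e P T) (hex : IsExact K q P)
    {N : ℕ} (hN : n ≤ N) {z : ℕ} (hz : ∀ c ∈ P, c.2.2 < z) :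
    hilb K e T z = macaulayHilbFun q (macaulay K q P) N z := by
  have hdim (c) (hc : c ∈ P) : (#c.2.1).multichoose (z - c.2.2) =
      ∑ k ∈ range N, if k + 1 ≤ #c.2.1 then (k + 1).multichoose (z - (c.2.2 + 1)) else 0 := by
    have hcard : #c.2.1 ≤ n := by simpa using card_le_univ c.2.1
    rw [show z - c.2.2 = z - (c.2.2 + 1) + 1 by have := hz c hc; omega,
      Nat.multichoose_succ_eq_sum_range, ← sum_filter]
    congr 1
    ext k
    simp only [mem_range, mem_filter]
    omega
  rw [hilb_eq_sum_multichoose hdec fun c hc => (hz c hc).le, sum_congr rfl hdim, sum_comm]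
  refine sum_congr rfl fun k _ => ?_
  rw [← sum_filter, ← image_deg_filter_eq_Ico hex.1 k.succ_pos, sum_image]
  intro c hc c' hc' hcc'
  by_contra hne
  exact hex.2 c (mem_filter.1 hc).1 c' (mem_filter.1 hc').1 (by simp at hc; omega)
    (by simp at hc'; omega) hne hcc'

end

/-- If `P`, `Q` are `q`-exact cone decompositions (same `q`) of graded
subspaces `T`, `T'` of graded free modules and `T`, `T'` have the same Hilbert polynomial
(i.e. eventually equal Hilbert functions), then they have the same Macaulay constants
`b₁,…,b_{n+1}`. -/
theorem stmt_8 (K : Type*) [Field K] (n m m' q : ℕ) (e : Fin m → ℕ) (e' : Fin m' → ℕ)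
    (T : Submodule K (FreeMod K n m)) (P : Finset (ConeData K n m))
    (T' : Submodule K (FreeMod K n m')) (Q : Finset (ConeData K n m'))
    (hdecP : IsConeDecomp K e P T) (hexP : IsExact K q P)
    (hdecQ : IsConeDecomp K e' Q T') (hexQ : IsExact K q Q)
    (hHP : ∃ N : ℕ, ∀ z : ℕ, N ≤ z → hilb K e T z = hilb K e' T' z) :
    ∀ k : ℕ, 1 ≤ k → k ≤ n + 1 → macaulay K q P k = macaulay K q Q k := by
  obtain ⟨N, hN⟩ := hHP
  refine eq_of_macaulayHilbFun_eventuallyEq (fun _ => le_max_left _ _)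
    (fun _ => le_max_left _ _) ?_
  filter_upwards [eventually_ge_atTop N, eventually_gt_atTop (P.sup fun c => c.2.2),
    eventually_gt_atTop (Q.sup fun c => c.2.2)] with z hzN hzP hzQ
  rw [← hilb_eq_macaulayHilbFun hdecP hexP n.le_succ fun c hc => (le_sup hc).trans_lt hzP,
    ← hilb_eq_macaulayHilbFun hdecQ hexQ n.le_succ fun c hc => (le_sup hc).trans_lt hzQ, hN z hzN]
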